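/- arXiv:1512.04728 — 12 statements merged into one kernel-verified Lean document; each statement's English description precedes it below -/
import Mathlib

section
/- Soundness of rule (R₀): if a team X satisfies ⋈(x, y) and x_i ∈ x, then X satisfies ⋈({x_i}, (x ∖ {x_i}) ∪ y). -/
/-- A team with index set `I`, variables `V` and values in `A` is given by
its assignment function `τ : I → V → A`.  The team `τ` satisfies the
G-dependence atom `⋈(x, y)` iff for all rows `s, s'`: if there is *exactly one*
variable `xi ∈ x` with `τ s xi ≠ τ s' xi`, then there is at least one `yj ∈ y`
with `τ s yj ≠ τ s' yj`. -/
def GDep {I V A : Type*} (τ : I → V → A) (x y : Finset V) : Prop :=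
  ∀ s s' : I, (∃! xi, xi ∈ x ∧ τ s xi ≠ τ s' xi) → ∃ yj ∈ y, τ s yj ≠ τ s' yj

/-- The team `τ` satisfies the functional dependence atom `dep(x, y)` iff any
two rows agreeing on all variables of `x` agree on all variables of `y`. -/
def FDep {I V A : Type*} (τ : I → V → A) (x y : Finset V) : Prop :=
  ∀ s s' : I, (∀ v ∈ x, τ s v = τ s' v) → ∀ w ∈ y, τ s w = τ s' w

/-- Soundness of rule (R₀): if `X ⊨ ⋈(x, y)` and `xi ∈ x`, then
`X ⊨ ⋈({xi}, (x ∖ {xi}) ∪ y)`. -/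
theorem gdep_r0_sound {I V A : Type*} [DecidableEq V] (τ : I → V → A)
    {x y : Finset V} {xi : V} (hxy : GDep τ x y) (hxi : xi ∈ x) :
    GDep τ {xi} ((x \ {xi}) ∪ y) := by
  intro s s' ⟨v, ⟨hv, hne⟩, _⟩
  rw [Finset.mem_singleton] at hv
  subst hv
  by_cases h : ∃ w ∈ x \ ({v} : Finset V), τ s w ≠ τ s' w
  · obtain ⟨w, hw, hwne⟩ := h
    exact ⟨w, Finset.mem_union_left _ hw, hwne⟩
  · push_neg at h
    have hu : ∃! w, w ∈ x ∧ τ s w ≠ τ s' w := by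
      refine ⟨v, ⟨hxi, hne⟩, ?_⟩
      intro w ⟨hwx, hwne⟩
      by_contra hwv
      exact hwne (h w (Finset.mem_sdiff.mpr ⟨hwx, by simpa using hwv⟩))
    obtain ⟨yj, hyj, hyne⟩ := hxy s s' hu
    exact ⟨yj, Finset.mem_union_right _ hyj, hyne⟩
end

section
/- Soundness of rule (R'₀): if a team X satisfies ⋈({x_i}, (x ∖ {x_i}) ∪ y) for every x_i ∈ x (where x is a finite set of variables), then X satisfies ⋈(x, y). -/
/-- Soundness of rule (R'₀): if `X ⊨ ⋈({xi}, (x ∖ {xi}) ∪ y)` for every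
`xi ∈ x`, then `X ⊨ ⋈(x, y)`. -/
theorem gdep_r0'_sound {I V A : Type*} [DecidableEq V] (τ : I → V → A)
    {x y : Finset V} (h : ∀ xi ∈ x, GDep τ {xi} ((x \ {xi}) ∪ y)) :
    GDep τ x y := by
  rintro s s' ⟨xi, ⟨hxi, hne⟩, huniq⟩
  obtain ⟨yj, hyj, hyne⟩ := h xi hxi s s'
    ⟨xi, ⟨Finset.mem_singleton_self xi, hne⟩, fun z hz => Finset.mem_singleton.mp hz.1⟩
  rcases Finset.mem_union.mp hyj with hmem | hmem
  · obtain ⟨hyx, hyni⟩ := Finset.mem_sdiff.mp hmem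
    exact absurd (huniq yj ⟨hyx, hyne⟩) (by simpa using hyni)
  · exact ⟨yj, hmem, hyne⟩
end

section
/- Soundness of rule (R₂): let z = {z_0, …, z_{n-1}} be a finite set of variables. If a team X satisfies ⋈({z_i}, y) for every z_i ∈ z and X satisfies ⋈({x_0}, z), then X satisfies ⋈({x_0}, y). -/
/-- Soundness of rule (R₂): if `X ⊨ ⋈({zi}, y)` for every `zi ∈ z` and
`X ⊨ ⋈({x0}, z)`, then `X ⊨ ⋈({x0}, y)`. -/
theorem gdep_r2_sound {I V A : Type*} (τ : I → V → A)
    {x0 : V} {z y : Finset V} (hz : ∀ zi ∈ z, GDep τ {zi} y)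
    (hx : GDep τ {x0} z) : GDep τ {x0} y := by
  intro s s' h
  obtain ⟨zj, hzj, hne⟩ := hx s s' h
  exact hz zj hzj s s' ⟨zj, ⟨Finset.mem_singleton_self _, hne⟩,
    fun w hw => Finset.mem_singleton.mp hw.1⟩
end

section
/- Soundness of the G-dependence deductive system: if Σ ⊢ σ (σ is derivable from the set Σ of G-dependence atoms in the deductive system with axioms A₀, A₁ and rules R₀, R'₀, R₁, R₂), then Σ ⊨ σ, i.e. every team satisfying all atoms of Σ also satisfies σ. -/
/-- The provability relation `Σ ⊢ ⋈(x, y)` for G-dependence atoms, generated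
by the premises in `S` together with the axioms (A₀), (A₁) and the rules
(R₀), (R'₀), (R₁), (R₂). -/
inductive GProv {V : Type*} [DecidableEq V] (S : Set (Finset V × Finset V)) :
    Finset V → Finset V → Prop
  | prem {x y : Finset V} : (x, y) ∈ S → GProv S x y
  | a0 (y : Finset V) : GProv S ∅ y
  | a1 (x : Finset V) : GProv S x x
  | r0 {x y : Finset V} {xi : V} : GProv S x y → xi ∈ x →
      GProv S {xi} ((x \ {xi}) ∪ y)
  | r0' {x y : Finset V} : (∀ xi ∈ x, GProv S {xi} ((x \ {xi}) ∪ y)) →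
      GProv S x y
  | r1 {x y : Finset V} (z : Finset V) : GProv S x y → GProv S x (y ∪ z)
  | r2 {x0 : V} {z y : Finset V} : (∀ zi ∈ z, GProv S {zi} y) →
      GProv S {x0} z → GProv S {x0} y

/-- Soundness of the G-dependence deductive system: if `Σ ⊢ σ`, then `Σ ⊨ σ`,
i.e. every team satisfying all atoms of `Σ` also satisfies `σ`. -/
theorem gprov_sound {V : Type*} [DecidableEq V]
    {S : Set (Finset V × Finset V)} {x y : Finset V} (h : GProv S x y) :
    ∀ (I A : Type*) (τ : I → V → A),
      (∀ p ∈ S, GDep τ p.1 p.2) → GDep τ x y := by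
  induction h with
  | prem h => exact fun I A τ hS => hS _ h
  | a0 y =>
      rintro I A τ _ s s' ⟨xi, ⟨hxi, _⟩, _⟩
      exact absurd hxi (Finset.notMem_empty xi)
  | a1 x =>
      rintro I A τ _ s s' ⟨xi, ⟨hxi, hne⟩, _⟩
      exact ⟨xi, hxi, hne⟩
  | r0 h hmem ih =>
      rename_i x y xi
      rintro I A τ hS s s' ⟨w, ⟨hw, hne⟩, _⟩
      rw [Finset.mem_singleton] at hw; subst hw
      by_cases hall : ∀ v ∈ x, v ≠ w → τ s v = τ s' v
      · have huniq : ∃! v, v ∈ x ∧ τ s v ≠ τ s' v := by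
          refine ⟨w, ⟨hmem, hne⟩, ?_⟩
          rintro v ⟨hv, hvne⟩
          by_contra hvw
          exact hvne (hall v hv hvw)
        obtain ⟨yj, hyj, hyne⟩ := ih I A τ hS s s' huniq
        exact ⟨yj, Finset.mem_union_right _ hyj, hyne⟩
      · push_neg at hall
        obtain ⟨v, hv, hvw, hvne⟩ := hall
        exact ⟨v, Finset.mem_union_left _
          (Finset.mem_sdiff.mpr ⟨hv, by simpa using hvw⟩), hvne⟩
  | r0' h ih =>
      rename_i x y
      rintro I A τ hS s s' ⟨xi, ⟨hxi, hne⟩, huniq⟩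
      have : ∃! v, v ∈ ({xi} : Finset V) ∧ τ s v ≠ τ s' v := by
        refine ⟨xi, ⟨Finset.mem_singleton_self xi, hne⟩, ?_⟩
        rintro v ⟨hv, _⟩; exact Finset.mem_singleton.mp hv
      obtain ⟨yj, hyj, hyne⟩ := ih xi hxi I A τ hS s s' this
      rcases Finset.mem_union.mp hyj with hj | hj
      · obtain ⟨hjx, hjni⟩ := Finset.mem_sdiff.mp hj
        exact absurd (huniq yj ⟨hjx, hyne⟩) (by simpa using hjni)
      · exact ⟨yj, hj, hyne⟩
  | r1 z h ih =>
      intro I A τ hS s s' hu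
      obtain ⟨yj, hyj, hyne⟩ := ih I A τ hS s s' hu
      exact ⟨yj, Finset.mem_union_left _ hyj, hyne⟩
  | r2 hz hx ihz ihx =>
      intro I A τ hS s s' hu
      obtain ⟨zi, hzi, hzne⟩ := ihx I A τ hS s s' hu
      refine ihz zi hzi I A τ hS s s' ?_
      refine ⟨zi, ⟨Finset.mem_singleton_self zi, hzne⟩, ?_⟩
      rintro v ⟨hv, _⟩; exact Finset.mem_singleton.mp hv
end

section
/- Completeness of the G-dependence deductive system: let Var be a countably infinite set of variables and let Σ ∪ {σ} be a set of G-dependence atoms over finite subsets of Var. If Σ ⊨ σ (every team satisfying all of Σ satisfies σ), then Σ ⊢ σ. -/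
/-- Completeness of the G-dependence deductive system: over a countably
infinite set of variables, if `Σ ⊨ σ` then `Σ ⊢ σ`. -/
theorem gprov_complete {V : Type} [DecidableEq V] [Countable V] [Infinite V]
    {S : Set (Finset V × Finset V)} {x y : Finset V}
    (h : ∀ (I A : Type) (τ : I → V → A),
      (∀ p ∈ S, GDep τ p.1 p.2) → GDep τ x y) :
    GProv S x y := by
  classical
  apply GProv.r0'
  intro xi hxi
  by_contra hnp
  set w : Finset V := (x \ {xi}) ∪ y with hw
  set cl : V → Prop := fun v => GProv S {v} w with hcl
  have hmem : ∀ v ∈ w, cl v := by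
    intro v hv
    have h1 : GProv S {v} ({v} ∪ (w \ {v})) := GProv.r1 _ (GProv.a1 {v})
    have he : {v} ∪ (w \ {v}) = w := by
      ext u
      simp only [Finset.mem_union, Finset.mem_singleton, Finset.mem_sdiff]
      constructor
      · rintro (rfl | ⟨hu, _⟩)
        · exact hv
        · exact hu
      · intro hu
        by_cases huv : u = v
        · exact Or.inl huv
        · exact Or.inr ⟨hu, huv⟩
    rwa [he] at h1
  set τ : Bool → V → Bool := fun s v => if cl v then true else s with hτ
  have hagree : ∀ (s s' : Bool) (v : V), cl v → τ s v = τ s' v := by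
    intro s s' v hv; simp [hτ, hv]
  have hsat : ∀ p ∈ S, GDep τ p.1 p.2 := by
    intro p hp s s' hex
    obtain ⟨v, ⟨hvmem, hvne⟩, huniq⟩ := hex
    have hss' : s ≠ s' := by
      intro hss; exact hvne (by rw [hss])
    have hclv : ¬ cl v := fun hcv => hvne (hagree s s' v hcv)
    have hprov : GProv S {v} ((p.1 \ {v}) ∪ p.2) := GProv.r0 (GProv.prem hp) hvmem
    by_contra hno
    push_neg at hno
    have hall : ∀ u ∈ (p.1 \ {v}) ∪ p.2, GProv S {u} w := by
      intro u hu
      by_contra hcu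
      have hune : τ s u ≠ τ s' u := by
        have : ¬ cl u := hcu
        simp only [hτ]
        simpa [this] using hss'
      rcases Finset.mem_union.mp hu with hu1 | hu2
      · obtain ⟨hup, huv⟩ := Finset.mem_sdiff.mp hu1
        exact (Finset.mem_singleton.not.mp huv) (huniq u ⟨hup, hune⟩)
      · exact hune (hno u hu2)
    exact hclv (GProv.r2 hall hprov)
  have hG : GDep τ x y := h Bool Bool τ hsat
  have hxine : τ false xi ≠ τ true xi := by
    have : ¬ cl xi := hnp
    simp [hτ, this]
  have hexu : ∃! u, u ∈ x ∧ τ false u ≠ τ true u := by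
    refine ⟨xi, ⟨hxi, hxine⟩, ?_⟩
    intro u ⟨hu, hune⟩
    by_contra huxi
    have huw : u ∈ w := Finset.mem_union_left _ (Finset.mem_sdiff.mpr ⟨hu, Finset.notMem_singleton.mpr huxi⟩)
    exact hune (hagree false true u (hmem u huw))
  obtain ⟨yj, hyj, hyne⟩ := hG false true hexu
  exact hyne (hagree false true yj (hmem yj (Finset.mem_union_right _ hyj)))
end

section
/- Soundness and completeness for G-dependence (Theorem 1): let Var be a countably infinite set of variables and let Σ ∪ {σ} be a set of G-dependence atoms over finite subsets of Var. Then Σ ⊢ σ if and only if Σ ⊨ σ. -/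
open Classical in
noncomputable def pairTeam {V : Type} (D : Set V) : Bool → V → Bool :=
  fun b v => if v ∈ D then b else false

lemma pairTeam_ne {V : Type} (D : Set V) (s s' : Bool) (v : V) :
    pairTeam D s v ≠ pairTeam D s' v ↔ s ≠ s' ∧ v ∈ D := by
  unfold pairTeam
  by_cases hv : v ∈ D <;> simp [hv]

def Psem {V : Type} (D : Set V) (u w : Finset V) : Prop :=
  (∃! v, v ∈ u ∧ v ∈ D) → ∃ j ∈ w, j ∈ D

lemma gdep_pairTeam {V : Type} (D : Set V) (u w : Finset V) :
    GDep (pairTeam D) u w ↔ Psem D u w := by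
  constructor
  · intro h hu
    have hmain := h false true ?side
    case side =>
      obtain ⟨v, ⟨hv1, hv2⟩, huniq⟩ := hu
      refine ⟨v, ⟨hv1, (pairTeam_ne D _ _ v).2 ⟨Bool.false_ne_true, hv2⟩⟩, ?_⟩
      intro w' hw'
      exact huniq w' ⟨hw'.1, ((pairTeam_ne D _ _ w').1 hw'.2).2⟩
    obtain ⟨j, hj, hne⟩ := hmain
    exact ⟨j, hj, ((pairTeam_ne D _ _ j).1 hne).2⟩
  · intro h s s' hs
    rcases eq_or_ne s s' with rfl | hne
    · obtain ⟨v, ⟨_, hv⟩, _⟩ := hs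
      exact absurd rfl hv
    · have hex : ∃! v, v ∈ u ∧ v ∈ D := by
        obtain ⟨v, ⟨hv1, hv2⟩, huniq⟩ := hs
        exact ⟨v, ⟨hv1, ((pairTeam_ne D _ _ v).1 hv2).2⟩,
          fun w' hw' => huniq w' ⟨hw'.1, (pairTeam_ne D _ _ w').2 ⟨hne, hw'.2⟩⟩⟩
      obtain ⟨j, hj, hjD⟩ := h hex
      exact ⟨j, hj, (pairTeam_ne D _ _ j).2 ⟨hne, hjD⟩⟩

lemma gprov_of_mem {V : Type} [DecidableEq V] (S : Set (Finset V × Finset V))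
    {j : V} {y : Finset V} (hj : j ∈ y) : GProv S {j} y := by
  have h := GProv.r1 (S := S) y (GProv.a1 {j})
  rwa [Finset.union_eq_right.mpr (Finset.singleton_subset_iff.mpr hj)] at h

lemma complete_single {V : Type} [DecidableEq V] (S : Set (Finset V × Finset V))
    (x0 : V) (y : Finset V)
    (h : ∀ D : Set V, (∀ p ∈ S, Psem D p.1 p.2) → Psem D {x0} y) :
    GProv S {x0} y := by
  set D : Set V := {v | ¬ GProv S {v} y} with hD
  have hprem : ∀ p ∈ S, Psem D p.1 p.2 := by
    intro p hp hu
    obtain ⟨w0, ⟨hw0u, hw0D⟩, huniq⟩ := hu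
    by_contra hcon
    push_neg at hcon
    have hw0D' : ¬ GProv S {w0} y := hw0D
    apply hw0D'
    have h1 : GProv S {w0} ((p.1 \ {w0}) ∪ p.2) := GProv.r0 (GProv.prem hp) hw0u
    refine GProv.r2 ?_ h1
    intro zi hzi
    rcases Finset.mem_union.1 hzi with hz | hz
    · obtain ⟨hz1, hz2⟩ := Finset.mem_sdiff.1 hz
      by_contra hzD
      exact (Finset.notMem_singleton.1 hz2) (huniq zi ⟨hz1, hzD⟩)
    · by_contra hzD
      exact hcon zi hz hzD
  by_contra hcon
  have hx0D : x0 ∈ D := hcon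
  obtain ⟨j, hj, hjD⟩ := h D hprem ⟨x0, ⟨Finset.mem_singleton_self x0, hx0D⟩,
    fun w' hw' => Finset.mem_singleton.1 hw'.1⟩
  exact hjD (gprov_of_mem S hj)

/-- Soundness and completeness for G-dependence (Theorem 1): over a countably
infinite set of variables, `Σ ⊢ σ` if and only if `Σ ⊨ σ`. -/
theorem gprov_sound_complete {V : Type} [DecidableEq V] [Countable V] [Infinite V]
    {S : Set (Finset V × Finset V)} {x y : Finset V} :
    GProv S x y ↔
      ∀ (I A : Type) (τ : I → V → A),
        (∀ p ∈ S, GDep τ p.1 p.2) → GDep τ x y := by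
  constructor
  · intro h I A τ hS
    induction h with
    | prem hp => exact hS _ hp
    | a0 y =>
        intro s s' hu
        obtain ⟨v, ⟨hv, _⟩, _⟩ := hu
        exact absurd hv (Finset.notMem_empty v)
    | a1 x =>
        intro s s' hu
        obtain ⟨v, ⟨hv1, hv2⟩, _⟩ := hu
        exact ⟨v, hv1, hv2⟩
    | @r0 x y xi hxy hxi ih =>
        intro s s' hu
        obtain ⟨v, ⟨hv1, hv2⟩, _⟩ := hu
        rw [Finset.mem_singleton] at hv1
        subst hv1
        by_cases hw : ∃ w ∈ x \ {v}, τ s w ≠ τ s' w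
        · obtain ⟨w, hw1, hw2⟩ := hw
          exact ⟨w, Finset.mem_union_left _ hw1, hw2⟩
        · push_neg at hw
          have hux : ∃! u, u ∈ x ∧ τ s u ≠ τ s' u := by
            refine ⟨v, ⟨hxi, hv2⟩, ?_⟩
            intro u hu'
            by_contra hne
            exact hu'.2 (hw u (Finset.mem_sdiff.2 ⟨hu'.1, Finset.notMem_singleton.2 hne⟩))
          obtain ⟨j, hj, hjne⟩ := ih s s' hux
          exact ⟨j, Finset.mem_union_right _ hj, hjne⟩
    | @r0' x y hall ih =>
        intro s s' hu
        obtain ⟨xi, ⟨hxi, hne⟩, huniq⟩ := hu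
        obtain ⟨j, hj, hjne⟩ := ih xi hxi s s'
          ⟨xi, ⟨Finset.mem_singleton_self xi, hne⟩,
            fun u hu' => Finset.mem_singleton.1 hu'.1⟩
        rcases Finset.mem_union.1 hj with hj' | hj'
        · obtain ⟨hj1, hj2⟩ := Finset.mem_sdiff.1 hj'
          exact absurd (huniq j ⟨hj1, hjne⟩) (Finset.notMem_singleton.1 hj2)
        · exact ⟨j, hj', hjne⟩
    | r1 z hxy ih =>
        intro s s' hu
        obtain ⟨j, hj, hne⟩ := ih s s' hu
        exact ⟨j, Finset.mem_union_left _ hj, hne⟩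
    | @r2 x0 z y hz hx ih1 ih2 =>
        intro s s' hu
        obtain ⟨zi, hzi, hne⟩ := ih2 s s' hu
        exact ih1 zi hzi s s'
          ⟨zi, ⟨Finset.mem_singleton_self zi, hne⟩,
            fun u hu' => Finset.mem_singleton.1 hu'.1⟩
  · intro h
    have hP : ∀ D : Set V, (∀ p ∈ S, Psem D p.1 p.2) → Psem D x y := by
      intro D hDS
      exact (gdep_pairTeam D x y).1 (h Bool Bool (pairTeam D)
        (fun p hp => (gdep_pairTeam D p.1 p.2).2 (hDS p hp)))
    apply GProv.r0'
    intro xi hxi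
    apply complete_single
    intro D hDS hxiD
    obtain ⟨v, ⟨hv1, hv2⟩, _⟩ := hxiD
    rw [Finset.mem_singleton] at hv1
    subst hv1
    by_cases hw : ∃ w ∈ x \ {v}, w ∈ D
    · obtain ⟨w, hw1, hw2⟩ := hw
      exact ⟨w, Finset.mem_union_left _ hw1, hw2⟩
    · push_neg at hw
      have hux : ∃! u, u ∈ x ∧ u ∈ D := by
        refine ⟨v, ⟨hxi, hv2⟩, ?_⟩
        intro u hu'
        by_contra hne
        exact hw u (Finset.mem_sdiff.2 ⟨hu'.1, Finset.notMem_singleton.2 hne⟩) hu'.2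
      obtain ⟨j, hj, hjD⟩ := hP D hDS hux
      exact ⟨j, Finset.mem_union_right _ hj, hjD⟩
end

section
/- Two-row counterexample construction: let Var be a countably infinite set of variables and let Σ ∪ {σ} be a set of G-dependence atoms over finite subsets of Var with Σ ⊬ σ. Then there exists a team X with index set {0, 1} (two rows), domain Var, and values in {0, 1} such that X ⊨ Σ and X ⊭ σ. -/
/-- Two-row counterexample construction: if `Σ ⊬ σ`, then there is a team
with two rows and values in `{0, 1}`, with domain all of `Var`, satisfying `Σ`
but not `σ`. -/
theorem gprov_two_row_counterexample {V : Type} [DecidableEq V] [Countable V]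
    [Infinite V] {S : Set (Finset V × Finset V)} {x y : Finset V}
    (h : ¬ GProv S x y) :
    ∃ τ : Fin 2 → V → Fin 2,
      (∀ p ∈ S, GDep τ p.1 p.2) ∧ ¬ GDep τ x y := by
  classical
  obtain ⟨x0, hx0x, hx0⟩ : ∃ x0 ∈ x, ¬ GProv S {x0} ((x \ {x0}) ∪ y) := by
    by_contra hc
    push_neg at hc
    exact h (GProv.r0' hc)
  set W : Finset V := (x \ {x0}) ∪ y with hW
  set P : V → Prop := fun v => ¬ GProv S {v} W with hP
  -- any element of W fails P
  have hmemW : ∀ v ∈ W, ¬ P v := by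
    intro v hv
    simp only [hP, not_not]
    have h1 : GProv S {v} ({v} ∪ W) := GProv.r1 W (GProv.a1 {v})
    rwa [Finset.union_eq_right.mpr (Finset.singleton_subset_iff.mpr hv)] at h1
  refine ⟨fun s v => if P v then s else 0, ?_, ?_⟩
  · -- key: difference characterization
    have key : ∀ (s s' : Fin 2) (v : V),
        ((if P v then s else 0) ≠ (if P v then s' else 0)) ↔ (P v ∧ s ≠ s') := by
      intro s s' v
      by_cases hv : P v
      · rw [if_pos hv, if_pos hv]
        exact ⟨fun hn => ⟨hv, hn⟩, fun hn => hn.2⟩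
      · rw [if_neg hv, if_neg hv]; simp [hv]
    rintro ⟨p, q⟩ hpq s s' ⟨p0, ⟨hp0p, hp0d⟩, huniq⟩
    rw [key] at hp0d
    obtain ⟨hPp0, hss⟩ := hp0d
    by_contra hq
    push_neg at hq
    have hqP : ∀ qj ∈ q, ¬ P qj := by
      intro qj hqj hPqj
      exact ((key s s' qj).mpr ⟨hPqj, hss⟩) (hq qj hqj)
    have hpP : ∀ pi ∈ p, pi ≠ p0 → ¬ P pi := by
      intro pi hpi hne hPpi
      exact hne (huniq pi ⟨hpi, (key s s' pi).mpr ⟨hPpi, hss⟩⟩)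
    have hz : ∀ zi ∈ (p \ {p0}) ∪ q, GProv S {zi} W := by
      intro zi hzi
      rcases Finset.mem_union.mp hzi with hzi | hzi
      · obtain ⟨hzp, hzne⟩ := Finset.mem_sdiff.mp hzi
        have := hpP zi hzp (by simpa using hzne)
        simpa [hP, not_not] using this
      · have := hqP zi hzi
        simpa [hP, not_not] using this
    exact hPp0 (GProv.r2 hz (GProv.r0 (GProv.prem hpq) hp0p))
  · intro hbad
    have key : ∀ v : V,
        ((if P v then (0 : Fin 2) else 0) ≠ (if P v then (1 : Fin 2) else 0)) ↔ P v := by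
      intro v
      by_cases hv : P v
      · rw [if_pos hv, if_pos hv]
        exact iff_of_true (by decide) hv
      · rw [if_neg hv, if_neg hv]; simp [hv]
    obtain ⟨yj, hyj, hyd⟩ := hbad 0 1 ⟨x0, ⟨hx0x, (key x0).mpr hx0⟩, by
      rintro z ⟨hzx, hzd⟩
      rw [key] at hzd
      by_contra hne
      exact hmemW z (Finset.mem_union_left _ (Finset.mem_sdiff.mpr ⟨hzx, by simpa using hne⟩)) hzd⟩
    rw [key] at hyd
    exact hmemW yj (Finset.mem_union_right _ hyj) hyd
end

section
/- Let Σ be a deductively closed set of G-dependence atoms (i.e. Σ ⊢ π implies π ∈ Σ). If ⋈(x, y) ∉ Σ, then x is nonempty and there exists x_i ∈ x such that ⋈({x_i}, (x ∖ {x_i}) ∪ y) ∉ Σ and x_i ∉ y. -/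
/-- If `Σ` is deductively closed and `⋈(x, y) ∉ Σ`, then `x` is nonempty and
there is `xi ∈ x` with `⋈({xi}, (x ∖ {xi}) ∪ y) ∉ Σ` and `xi ∉ y`. -/
theorem gprov_witness_of_not_mem {V : Type*} [DecidableEq V]
    {S : Set (Finset V × Finset V)}
    (hded : ∀ x y : Finset V, GProv S x y → (x, y) ∈ S)
    {x y : Finset V} (h : (x, y) ∉ S) :
    x.Nonempty ∧ ∃ xi ∈ x, ({xi}, (x \ {xi}) ∪ y) ∉ S ∧ xi ∉ y := by
  constructor
  · rcases Finset.eq_empty_or_nonempty x with rfl | hne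
    · exact absurd (hded _ _ (GProv.a0 y)) h
    · exact hne
  · by_contra hc
    push_neg at hc
    apply h
    apply hded
    apply GProv.r0'
    intro xi hxi
    rcases Classical.em (({xi}, (x \ {xi}) ∪ y) ∈ S) with hm | hm
    · exact GProv.prem hm
    · have hy : xi ∈ y := hc xi hxi hm
      have : GProv S {xi} ({xi} ∪ ((x \ {xi}) ∪ y)) :=
        GProv.r1 _ (GProv.a1 {xi})
      have he : {xi} ∪ ((x \ {xi}) ∪ y) = (x \ {xi}) ∪ y := by
        ext a
        simp only [Finset.mem_union, Finset.mem_singleton]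
        constructor
        · rintro (rfl | ha)
          · exact Or.inr hy
          · exact ha
        · exact Or.inr
      rwa [he] at this
end

section
/- Existence of Armstrong relations for G-dependence: let Var be a countably infinite set of variables and let Σ be a set of G-dependence atoms over finite subsets of Var. Then there exists a single team X (with domain Var) such that for every G-dependence atom σ: X ⊨ σ if and only if Σ ⊢ σ. -/
namespace ArmstrongAux

open Classical

variable {V : Type} [DecidableEq V] (S : Set (Finset V × Finset V))

/-- Horn-style closure: `InCl S B v` iff `v` is derivable from the set `B`
using, for each premise `(x, w) ∈ S` and `v ∈ x`, the clause
`v ← (x \ {v}) ∪ w`. -/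
inductive InCl (B : Set V) : V → Prop
  | base {v : V} : v ∈ B → InCl B v
  | rule {x w : Finset V} {v : V} : (x, w) ∈ S → v ∈ x →
      (∀ u ∈ (x \ {v}) ∪ w, InCl B u) → InCl B v

theorem incl_trans {B C : Set V} (hB : ∀ u ∈ B, InCl S C u) {v : V}
    (h : InCl S B v) : InCl S C v := by
  induction h with
  | base hv => exact hB _ hv
  | rule hS hv _ ih => exact InCl.rule hS hv ih

theorem incl_mono {B C : Set V} (hBC : B ⊆ C) {v : V} (h : InCl S B v) :
    InCl S C v :=
  incl_trans S (fun _ hu => InCl.base (hBC hu)) h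

/-- A set of variables closed under all the Horn clauses coming from `S`. -/
def ClosedS (C : Set V) : Prop :=
  ∀ ⦃x w : Finset V⦄, (x, w) ∈ S → ∀ ⦃u : V⦄, u ∈ x →
    (∀ u' ∈ (x \ {u}) ∪ w, u' ∈ C) → u ∈ C

theorem incl_closed {B C : Set V} (hBC : B ⊆ C) (hC : ClosedS S C) {v : V}
    (h : InCl S B v) : v ∈ C := by
  induction h with
  | base hv => exact hBC hv
  | rule hS hv _ ih => exact hC hS hv ih

/-- Derivation in the Horn closure gives a provable singleton atom. -/
theorem incl_prov {v : V} {y : Finset V} (h : InCl S (↑y) v) :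
    GProv S {v} y := by
  induction h with
  | @base v' hv =>
    have hvy : v' ∈ y := hv
    have h1 : GProv S {v'} ({v'} ∪ y) := GProv.r1 y (GProv.a1 {v'})
    rwa [Finset.union_eq_right.mpr (Finset.singleton_subset_iff.mpr hvy)] at h1
  | rule hS hv _ ih =>
    exact GProv.r2 ih (GProv.r0 (GProv.prem hS) hv)

/-- Soundness of provability w.r.t. the Horn closure. -/
theorem prov_incl {x y : Finset V} (h : GProv S x y) :
    ∀ v ∈ x, InCl S (↑((x \ {v}) ∪ y)) v := by
  induction h with
  | prem hS =>
    intro v hv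
    exact InCl.rule hS hv fun u hu => InCl.base (Finset.mem_coe.mpr hu)
  | a0 y => intro v hv; simp at hv
  | a1 x =>
    intro v hv
    exact InCl.base (by simp [hv])
  | r0 h hxi ih =>
    intro v hv
    rw [Finset.mem_singleton] at hv
    subst hv
    simpa using ih _ hxi
  | r0' h ih =>
    intro v hv
    have := ih v hv v (Finset.mem_singleton_self v)
    simpa using this
  | r1 z h ih =>
    intro v hv
    refine incl_mono S ?_ (ih v hv)
    intro u hu
    simp only [Finset.coe_union, Set.mem_union] at hu ⊢
    tauto
  | r2 hz hx0 ihz ihx0 =>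
    intro v hv
    rw [Finset.mem_singleton] at hv
    subst hv
    have h0 := ihx0 _ (Finset.mem_singleton_self _)
    simp only [Finset.sdiff_self, Finset.empty_union] at h0
    simp only [Finset.sdiff_self, Finset.empty_union]
    refine incl_trans S ?_ h0
    intro u hu
    have h1 := ihz u (Finset.mem_coe.mp hu) u (Finset.mem_singleton_self u)
    simpa using h1

theorem sing_prov {v : V} {y : Finset V} : GProv S {v} y ↔ InCl S (↑y) v := by
  constructor
  · intro h
    have := prov_incl S h v (Finset.mem_singleton_self v)
    simpa using this
  · exact incl_prov S

theorem prov_iff {x y : Finset V} :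
    GProv S x y ↔ ∀ v ∈ x, GProv S {v} ((x \ {v}) ∪ y) :=
  ⟨fun h v hv => GProv.r0 h hv, GProv.r0'⟩

/-- The Armstrong team: one two-row block for each pair `(v, y)`. -/
noncomputable def tm : (V × Finset V) × Bool → V → Option (V × Finset V) :=
  fun s w => if s.2 = true ∧ ¬ InCl S (↑s.1.2) w then some s.1 else none

theorem tm_eq_some {s : (V × Finset V) × Bool} {w : V} {p : V × Finset V}
    (h : tm S s w = some p) :
    s.1 = p ∧ s.2 = true ∧ ¬ InCl S (↑s.1.2) w := by
  unfold tm at h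
  split_ifs at h with hc
  exact ⟨Option.some.inj h, hc.1, hc.2⟩

theorem none_closed (s : (V × Finset V) × Bool) :
    ClosedS S {w | tm S s w = none} := by
  intro x w hS u hu hbody
  simp only [Set.mem_setOf_eq] at hbody ⊢
  unfold tm
  split_ifs with hc
  · exfalso
    apply hc.2
    refine InCl.rule hS hu ?_
    intro u' hu'
    have h' := hbody u' hu'
    by_contra hni
    simp [tm, hc.1, hni] at h'
  · rfl

theorem agree_closed (s s' : (V × Finset V) × Bool) :
    ClosedS S {w | tm S s w = tm S s' w} := by
  by_cases hss : s = s'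
  · subst hss
    intro x w hS u hu hbody
    simp
  · have heq : {w | tm S s w = tm S s' w}
        = {w | tm S s w = none} ∩ {w | tm S s' w = none} := by
      ext w
      simp only [Set.mem_setOf_eq, Set.mem_inter_iff]
      constructor
      · intro h
        cases hval : tm S s w with
        | none => exact ⟨rfl, h.symm.trans hval⟩
        | some p =>
          exfalso
          have h2 : tm S s' w = some p := h ▸ hval
          obtain ⟨h1a, h1b, _⟩ := tm_eq_some S hval
          obtain ⟨h2a, h2b, _⟩ := tm_eq_some S h2
          exact hss (Prod.ext (h1a.trans h2a.symm) (h1b.trans h2b.symm))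
      · intro ⟨h1, h2⟩
        rw [h1, h2]
    rw [heq]
    intro x w hS u hu hbody
    exact ⟨none_closed S s hS hu fun u' h => (hbody u' h).1,
      none_closed S s' hS hu fun u' h => (hbody u' h).2⟩

theorem sing_sem {v : V} {y : Finset V} :
    GDep (tm S) {v} y ↔ InCl S (↑y) v := by
  constructor
  · intro h
    by_contra hv
    have hdiff : tm S ((v, y), true) v ≠ tm S ((v, y), false) v := by
      simp [tm, hv]
    have hex : ∃! xi, xi ∈ ({v} : Finset V) ∧
        tm S ((v, y), true) xi ≠ tm S ((v, y), false) xi :=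
      ⟨v, ⟨Finset.mem_singleton_self v, hdiff⟩,
        fun u hu => Finset.mem_singleton.mp hu.1⟩
    obtain ⟨w, hwy, hwne⟩ := h _ _ hex
    apply hwne
    have hw : InCl S (↑y) w := InCl.base (Finset.mem_coe.mpr hwy)
    simp [tm, hw]
  · intro hv s s' hex
    obtain ⟨xi, ⟨hxi, hne⟩, _⟩ := hex
    have hxiv := Finset.mem_singleton.mp hxi
    subst hxiv
    by_contra hno
    push_neg at hno
    exact hne (incl_closed S (fun u hu => hno u (Finset.mem_coe.mp hu))
      (agree_closed S s s') hv)

/-- Semantic reduction of a general atom to singleton atoms (soundness of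
(R₀) and (R'₀)). -/
theorem gdep_iff {I A : Type*} (τ : I → V → A) (x y : Finset V) :
    GDep τ x y ↔ ∀ v ∈ x, GDep τ {v} ((x \ {v}) ∪ y) := by
  constructor
  · intro h v hv s s' hex
    obtain ⟨xi, ⟨hxi, hne⟩, _⟩ := hex
    rw [Finset.mem_singleton] at hxi
    subst hxi
    by_cases hx : ∃ u ∈ x \ ({xi} : Finset V), τ s u ≠ τ s' u
    · obtain ⟨u, hu, hune⟩ := hx
      exact ⟨u, Finset.mem_union_left _ hu, hune⟩
    · push_neg at hx
      have hex' : ∃! u, u ∈ x ∧ τ s u ≠ τ s' u := by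
        refine ⟨xi, ⟨hv, hne⟩, ?_⟩
        rintro u ⟨hu, hune⟩
        by_contra huv
        exact hune (hx u (Finset.mem_sdiff.mpr ⟨hu, by simp [huv]⟩))
      obtain ⟨w, hw, hwne⟩ := h s s' hex'
      exact ⟨w, Finset.mem_union_right _ hw, hwne⟩
  · intro h s s' hex
    obtain ⟨v, ⟨hv, hne⟩, huniq⟩ := hex
    obtain ⟨w, hw, hwne⟩ := h v hv s s'
      ⟨v, ⟨Finset.mem_singleton_self v, hne⟩,
        fun u hu => Finset.mem_singleton.mp hu.1⟩
    rcases Finset.mem_union.mp hw with hw' | hw'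
    · obtain ⟨hwx, hwv⟩ := Finset.mem_sdiff.mp hw'
      exact absurd (huniq w ⟨hwx, hwne⟩) (by simpa using hwv)
    · exact ⟨w, hw', hwne⟩

end ArmstrongAux

/-- Existence of Armstrong relations for G-dependence: for every set `Σ` of
G-dependence atoms over a countably infinite set of variables, there is a
single team `X` such that for every atom `σ`: `X ⊨ σ` iff `Σ ⊢ σ`. -/
theorem gdep_armstrong {V : Type} [DecidableEq V] [Countable V] [Infinite V]
    (S : Set (Finset V × Finset V)) :
    ∃ (I A : Type) (τ : I → V → A),
      ∀ x y : Finset V, GDep τ x y ↔ GProv S x y := by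
  refine ⟨(V × Finset V) × Bool, Option (V × Finset V), ArmstrongAux.tm S,
    fun x y => ?_⟩
  rw [ArmstrongAux.gdep_iff, ArmstrongAux.prov_iff]
  exact forall₂_congr fun v _ =>
    (ArmstrongAux.sing_sem S).trans (ArmstrongAux.sing_prov S).symm
end

section
/- Translation from functional dependence to G-dependence (Proposition, equation (1)): for every team X and finite sets of variables x and y = {y_0, …, y_{n-1}}: X ⊨ dep(x, y) if and only if X ⊨ ⋈({y_i}, x) for every i < n. -/
/-- Translation from functional dependence to G-dependence (equation (1)):
`X ⊨ dep(x, y)` iff `X ⊨ ⋈({yi}, x)` for every `yi ∈ y`. -/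
theorem fdep_iff_forall_gdep {I V A : Type*} [DecidableEq V]
    (τ : I → V → A) (x y : Finset V) :
    FDep τ x y ↔ ∀ yi ∈ y, GDep τ {yi} x := by
  constructor
  · intro h yi hyi s s' hex
    obtain ⟨xi, ⟨hmem, hne⟩, -⟩ := hex
    rw [Finset.mem_singleton] at hmem
    subst hmem
    by_contra hc
    push_neg at hc
    exact hne (h s s' hc xi hyi)
  · intro h s s' hagree w hw
    by_contra hne
    obtain ⟨v, hv, hvne⟩ := h w hw s s'
      ⟨w, ⟨Finset.mem_singleton_self w, hne⟩,
        fun z hz => Finset.mem_singleton.mp hz.1⟩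
    exact hvne (hagree v hv)
end

section
/- Translation from G-dependence to functional dependence (Proposition, equation (2)): for every team X and finite sets of variables x = {x_0, …, x_{n-1}} and y: X ⊨ ⋈(x, y) if and only if X ⊨ dep((x ∖ {x_i}) ∪ y, {x_i}) for every i < n. -/
/-- Translation from G-dependence to functional dependence (equation (2)):
`X ⊨ ⋈(x, y)` iff `X ⊨ dep((x \ {xi}) ∪ y, {xi})` for every `xi ∈ x`. -/
theorem gdep_iff_forall_fdep {I V A : Type*} [DecidableEq V]
    (τ : I → V → A) (x y : Finset V) :
    GDep τ x y ↔ ∀ xi ∈ x, FDep τ ((x \ {xi}) ∪ y) {xi} := by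
  constructor
  · intro h xi hxi s s' hagree w hw
    simp only [Finset.mem_singleton] at hw
    subst hw
    by_contra hne
    have huniq : ∃! z, z ∈ x ∧ τ s z ≠ τ s' z := by
      refine ⟨w, ⟨hxi, hne⟩, ?_⟩
      intro z ⟨hz, hzne⟩
      by_contra hzxi
      exact hzne (hagree z (Finset.mem_union_left _
        (Finset.mem_sdiff.mpr ⟨hz, by simpa using hzxi⟩)))
    obtain ⟨yj, hyj, hyne⟩ := h s s' huniq
    exact hyne (hagree yj (Finset.mem_union_right _ hyj))
  · intro h s s' ⟨xi, ⟨hxi, hne⟩, huniq⟩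
    by_contra hno
    push_neg at hno
    apply hne
    apply h xi hxi s s' ?_ xi (Finset.mem_singleton_self xi)
    intro v hv
    rcases Finset.mem_union.mp hv with hv | hv
    · obtain ⟨hvx, hvne⟩ := Finset.mem_sdiff.mp hv
      by_contra hd
      have : v = xi := huniq v ⟨hvx, hd⟩
      simp [this] at hvne
    · exact hno v hv
end

section
/- Reduction to singleton left-hand sides: if a team X satisfies every G-dependence atom in Σ whose left-hand side is a singleton that is derivable from Σ (i.e. X ⊨ ⋈({z}, w) whenever Σ ⊢ ⋈({z}, w)), and Σ is deductively closed, then X satisfies every atom derivable from Σ: for every finite sets x, y, Σ ⊢ ⋈(x, y) implies X ⊨ ⋈(x, y). -/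
/-- Reduction to singleton left-hand sides: if `Σ` is deductively closed and
`X` satisfies every atom with singleton left-hand side that is derivable from
`Σ`, then `X` satisfies every atom derivable from `Σ`. -/
theorem gdep_of_singleton_gdep {I V A : Type*} [DecidableEq V]
    {S : Set (Finset V × Finset V)} (τ : I → V → A)
    (hded : ∀ x y : Finset V, GProv S x y → (x, y) ∈ S)
    (hsing : ∀ (z : V) (w : Finset V), GProv S {z} w → GDep τ {z} w) :
    ∀ x y : Finset V, GProv S x y → GDep τ x y := by
  intro x y hxy s s' hex
  obtain ⟨xi, ⟨hxi, hne⟩, huniq⟩ := hex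
  have h := hsing xi _ (GProv.r0 hxy hxi) s s'
    ⟨xi, ⟨Finset.mem_singleton_self xi, hne⟩, fun z hz => Finset.mem_singleton.mp hz.1⟩
  obtain ⟨yj, hyj, hne'⟩ := h
  rcases Finset.mem_union.mp hyj with h1 | h1
  · obtain ⟨hjx, hjni⟩ := Finset.mem_sdiff.mp h1
    exact absurd (huniq yj ⟨hjx, hne'⟩) (fun heq => hjni (heq ▸ Finset.mem_singleton_self yj))
  · exact ⟨yj, h1, hne'⟩
end
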